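/- arXiv:2412.08768 — 6 statements merged into one kernel-verified Lean document; each statement's English description precedes it below -/
import Mathlib

section
/- For a convergent series of nonnegative terms (a_n), the achievement set E(a_n) = { x ∈ ℝ : ∃ A ⊆ ℕ, x = ∑_{n∈A} a_n } is a compact subset of ℝ. -/
/-!
Encode a subset `A ⊆ ℕ` by its indicator `b : ℕ → Bool`. The map sending `b` to `∑_{b n} a n` is
continuous on the compact Cantor space `ℕ → Bool`, since the `n`-th term depends only on `b n`
and is dominated by `|a n|`, which is summable because real summability is absolute
(Weierstrass M-test). The achievement set is its image, hence compact.
-/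

/-- The achievement set (set of all subsums) of a series. -/
noncomputable def achSet (a : ℕ → ℝ) : Set ℝ :=
  {x | ∃ A : Set ℕ, HasSum (A.indicator a) x}

section Subsums

variable {ι E : Type*} [NormedAddCommGroup E] [CompleteSpace E] {a : ι → E}

theorem continuous_tsum_indicator_setOf (ha : Summable (‖a ·‖)) :
    Continuous fun b : ι → Bool => ∑' i, {i | b i}.indicator a i := by
  refine continuous_tsum (fun i => ?_) ha fun i b => norm_indicator_le_norm_self a i
  exact (continuous_of_discreteTopology (f := fun v : Bool => if v then a i else 0)).comp
    (continuous_apply i) |>.congr fun b => by by_cases h : b i <;> simp [h]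

theorem isCompact_range_tsum_indicator (ha : Summable (‖a ·‖)) :
    IsCompact (Set.range fun s : Set ι => ∑' i, s.indicator a i) := by
  classical
  have hsurj : Function.Surjective fun b : ι → Bool => {i | b i} :=
    fun s => ⟨fun i => decide (i ∈ s), by simp⟩
  rw [← hsurj.range_comp]
  exact isCompact_range (continuous_tsum_indicator_setOf ha)

end Subsums

theorem achSet_eq_range_tsum_indicator {a : ℕ → ℝ} (ha : Summable a) :
    achSet a = Set.range fun A : Set ℕ => ∑' n, A.indicator a n := by
  ext x
  constructor
  · rintro ⟨A, hA⟩
    exact ⟨A, hA.tsum_eq⟩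
  · rintro ⟨A, rfl⟩
    exact ⟨A, (ha.indicator A).hasSum⟩

theorem subsums_compact_general (a : ℕ → ℝ) (hsum : Summable a) :
    IsCompact (achSet a) := by
  rw [achSet_eq_range_tsum_indicator hsum]
  exact isCompact_range_tsum_indicator hsum.norm

theorem subsums_compact (a : ℕ → ℝ) (hpos : ∀ n, 0 ≤ a n) (hsum : Summable a) :
    IsCompact (achSet a) :=
  subsums_compact_general a hsum
end

section
/- For a convergent series of positive, non-increasing terms (a_n), if a_n > r_n (where r_n = ∑_{i>n} a_i) for only finitely many n, then the achievement set E(a_n) is a finite union of closed bounded intervals. -/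
/-- The `n`-th remainder `r n = ∑_{i > n} a i`. -/
noncomputable def rem (a : ℕ → ℝ) (n : ℕ) : ℝ := ∑' j : ℕ, a (n + 1 + j)

/-!
Past the last index `N` with `rem a N < a N`, the tail `b j = a (j + N + 1)` satisfies
`b n ≤ rem b n` for every `n`, and then its subsums fill the whole interval `[0, ∑ b]`: for `x` in
that interval, greedily take `b n` whenever it does not overshoot `x`; the gap between `x` and the
greedy partial sum stays between `0` and the current tail sum, which tends to `0`.
A subsum of `a` is a subsum of `a 0, …, a N` plus a subsum of `b`, so the achievement set is the
union, over the subsets `s` of `{0, …, N}`, of the intervals `[∑ s, ∑ s + ∑ b]`.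
-/

open Filter Finset

lemma rem_eq_tsum_nat_add (b : ℕ → ℝ) (n : ℕ) : rem b n = ∑' j, b (j + (n + 1)) :=
  tsum_congr fun j => congrArg b (by omega)

lemma tsum_nat_add_eq_add_tsum_nat_add {b : ℕ → ℝ} (hb : Summable b) (n : ℕ) :
    ∑' j, b (j + n) = b n + ∑' j, b (j + (n + 1)) := by
  rw [((summable_nat_add_iff n).mpr hb).tsum_eq_zero_add, zero_add]
  exact congrArg _ (tsum_congr fun j => congrArg b (by omega))

lemma achSet_subset_Icc {b : ℕ → ℝ} (hb : ∀ n, 0 ≤ b n) (hsum : Summable b) :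
    achSet b ⊆ Set.Icc 0 (∑' n, b n) := by
  rintro x ⟨A, hA⟩
  exact ⟨hasSum_le (fun i => A.indicator_nonneg (fun j _ => hb j) i) hasSum_zero hA,
    hasSum_le (fun i => A.indicator_le_self' (fun j _ => hb j) i) hA hsum.hasSum⟩

noncomputable def greedySum (b : ℕ → ℝ) (x : ℝ) : ℕ → ℝ
  | 0 => 0
  | n + 1 => greedySum b x n + if greedySum b x n + b n ≤ x then b n else 0

lemma sum_range_indicator_eq_greedySum (b : ℕ → ℝ) (x : ℝ) (n : ℕ) :
    ∑ i ∈ range n, {k | greedySum b x k + b k ≤ x}.indicator b i = greedySum b x n := by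
  induction n with
  | zero => rfl
  | succ n ih =>
    rw [sum_range_succ, ih, Set.indicator_apply]
    rfl

lemma greedySum_le_and_le_add_tsum {b : ℕ → ℝ} (hsum : Summable b) (hrem : ∀ n, b n ≤ rem b n)
    {x : ℝ} (hx₀ : 0 ≤ x) (hx : x ≤ ∑' n, b n) (n : ℕ) :
    greedySum b x n ≤ x ∧ x ≤ greedySum b x n + ∑' j, b (j + n) := by
  induction n with
  | zero => simpa [greedySum] using ⟨hx₀, hx⟩
  | succ n ih =>
    have htail := tsum_nat_add_eq_add_tsum_nat_add hsum n
    have hn := rem_eq_tsum_nat_add b n ▸ hrem n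
    by_cases h : greedySum b x n + b n ≤ x
    · simp only [greedySum, if_pos h]
      constructor <;> linarith
    · -- skipping `b n` leaves `x < greedySum b x n + b n ≤ greedySum b x n + rem b n`
      simp only [greedySum, if_neg h]
      constructor <;> linarith

theorem achSet_eq_Icc_of_le_rem {b : ℕ → ℝ} (hb : ∀ n, 0 ≤ b n) (hsum : Summable b)
    (hrem : ∀ n, b n ≤ rem b n) : achSet b = Set.Icc 0 (∑' n, b n) := by
  refine (achSet_subset_Icc hb hsum).antisymm fun x ⟨hx₀, hx⟩ => ?_
  refine ⟨{k | greedySum b x k + b k ≤ x}, ?_⟩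
  rw [hasSum_iff_tendsto_nat_of_nonneg (fun i => Set.indicator_nonneg (fun j _ => hb j) i)]
  simp only [sum_range_indicator_eq_greedySum]
  have hbounds := greedySum_le_and_le_add_tsum hsum hrem hx₀ hx
  have hgap : Tendsto (fun n => x - greedySum b x n) atTop (nhds 0) :=
    squeeze_zero (fun n => sub_nonneg.mpr (hbounds n).1)
      (fun n => sub_le_iff_le_add'.mpr (hbounds n).2) (tendsto_sum_nat_add b)
  simpa using (tendsto_const_nhds (x := x)).sub hgap

lemma hasSum_indicator_iff_hasSum_indicator_nat_add {G : Type*} [AddCommGroup G]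
    [TopologicalSpace G] [IsTopologicalAddGroup G] (a : ℕ → G) (A : Set ℕ) [DecidablePred (· ∈ A)]
    (N : ℕ) (x : G) :
    HasSum (A.indicator a) x ↔
      HasSum (((· + N) ⁻¹' A).indicator fun j => a (j + N))
        (x - ∑ i ∈ range N with i ∈ A, a i) := by
  rw [← hasSum_nat_add_iff' N, sum_indicator_eq_sum_filter]
  exact Iff.rfl

lemma mem_achSet_iff_exists_sub_mem_achSet_nat_add (a : ℕ → ℝ) (N : ℕ) (x : ℝ) :
    x ∈ achSet a ↔ ∃ s ⊆ range N, x - ∑ i ∈ s, a i ∈ achSet fun j => a (j + N) := by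
  classical
  constructor
  · rintro ⟨A, hA⟩
    exact ⟨_, filter_subset _ _, _,
      (hasSum_indicator_iff_hasSum_indicator_nat_add a A N x).mp hA⟩
  · rintro ⟨s, hs, B, hB⟩
    set A : Set ℕ := ↑s ∪ (· + N) '' B
    have hpre : (· + N) ⁻¹' A = B := by
      ext j
      have : j + N ∉ s := fun h => by simpa using hs h
      simp [A, this]
    have hfilter : {i ∈ range N | i ∈ A} = s := by
      ext i
      constructor
      · simp only [A, mem_filter, mem_range, Set.mem_union, mem_coe, Set.mem_image]
        rintro ⟨hi, hs' | ⟨k, -, rfl⟩⟩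
        · exact hs'
        · omega
      · exact fun hi => mem_filter.mpr ⟨hs hi, Or.inl hi⟩
    refine ⟨A, (hasSum_indicator_iff_hasSum_indicator_nat_add a A N x).mpr ?_⟩
    rwa [hpre, hfilter]

lemma Finset.biUnion_eq_iUnion_equivFin {ι α : Type*} (P : Finset ι) (S : ι → Set α) :
    ⋃ i ∈ P, S i = ⋃ k : Fin P.card, S (P.equivFin.symm k) :=
  (Set.biUnion_eq_iUnion _ _).trans (P.equivFin.symm.surjective.iUnion_comp _).symm

theorem kakeya_multiinterval_general (a : ℕ → ℝ) (hpos : ∀ n, 0 < a n)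
    (hsum : Summable a) (hfin : {n | rem a n < a n}.Finite) :
    ∃ (m : ℕ) (f g : Fin m → ℝ), (∀ i, f i ≤ g i) ∧
      achSet a = ⋃ i, Set.Icc (f i) (g i) := by
  obtain ⟨N, hN⟩ := hfin.bddAbove
  set b : ℕ → ℝ := fun j => a (j + (N + 1))
  have hb : ∀ n, 0 ≤ b n := fun n => (hpos _).le
  have hrem : ∀ n, b n ≤ rem b n := fun n => by
    have hshift : rem b n = rem a (n + (N + 1)) := tsum_congr fun j => congrArg a (by omega)
    exact hshift ▸ not_lt.mp fun h => absurd (hN h) (by omega)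
  set P := (range (N + 1)).powerset
  have hunion : achSet a = ⋃ s ∈ P, Set.Icc (∑ i ∈ s, a i) (∑ i ∈ s, a i + ∑' n, b n) := by
    ext x
    rw [mem_achSet_iff_exists_sub_mem_achSet_nat_add a (N + 1),
      achSet_eq_Icc_of_le_rem hb ((summable_nat_add_iff _).mpr hsum) hrem]
    simp only [Set.mem_Icc, sub_nonneg, sub_le_iff_le_add', Set.mem_iUnion, mem_powerset, P,
      exists_prop]
  exact ⟨P.card, _, _, fun k => le_add_of_nonneg_right (tsum_nonneg hb),
    hunion.trans (P.biUnion_eq_iUnion_equivFin _)⟩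

/-- Kakeya: if `a n > r n` for only finitely many `n`, then the achievement set is a
finite union of closed bounded intervals. -/
theorem kakeya_multiinterval (a : ℕ → ℝ) (hpos : ∀ n, 0 < a n) (hmono : Antitone a)
    (hsum : Summable a) (hfin : {n | rem a n < a n}.Finite) :
    ∃ (m : ℕ) (f g : Fin m → ℝ), (∀ i, f i ≤ g i) ∧
      achSet a = ⋃ i, Set.Icc (f i) (g i) :=
  kakeya_multiinterval_general a hpos hsum hfin
end

section
/- For a convergent series of positive, non-increasing terms (a_n), if a_n ≤ r_n for only finitely many n (where r_n = ∑_{i>n} a_i), then the achievement set E(a_n) is nowhere dense, i.e., has empty interior. -/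
open Filter Finset Topology Pointwise

noncomputable def subsum (a : ℕ → ℝ) (f : ℕ → Bool) : ℝ := ∑' n, if f n then a n else 0

section Subsum

variable {a : ℕ → ℝ}

lemma indicator_setOf_bool (f : ℕ → Bool) :
    {n | f n}.indicator a = fun n => if f n then a n else 0 := by
  ext n
  simp [Set.indicator_apply]

lemma summable_ite_bool (ha : Summable a) (f : ℕ → Bool) :
    Summable fun n => if f n then a n else 0 :=
  indicator_setOf_bool (a := a) f ▸ ha.indicator _

lemma achSet_eq_range_subsum (ha : Summable a) : achSet a = Set.range (subsum a) := by
  ext x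
  constructor
  · classical
    rintro ⟨A, hA⟩
    refine ⟨fun n => decide (n ∈ A), ?_⟩
    simpa [subsum, Set.indicator_apply] using hA.tsum_eq
  · rintro ⟨f, rfl⟩
    exact ⟨{n | f n}, indicator_setOf_bool (a := a) f ▸ (summable_ite_bool ha f).hasSum⟩

lemma continuous_subsum (ha : Summable a) : Continuous (subsum a) :=
  continuous_tsum
    (fun n => (continuous_of_discreteTopology (f := fun t : Bool => if t then a n else 0)).comp
      (continuous_apply n))
    ha.abs fun n f => by split_ifs <;> simp

lemma isCompact_achSet (ha : Summable a) : IsCompact (achSet a) := by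
  rw [achSet_eq_range_subsum ha]
  exact isCompact_range (continuous_subsum ha)

lemma subsum_eq_sum_range_add (ha : Summable a) (f : ℕ → Bool) (k : ℕ) :
    subsum a f = ∑ n ∈ range k, (if f n then a n else 0)
      + subsum (fun n => a (n + k)) (fun n => f (n + k)) :=
  ((summable_ite_bool ha f).sum_add_tsum_nat_add k).symm

lemma subsum_nonneg (ha0 : ∀ n, 0 ≤ a n) (f : ℕ → Bool) : 0 ≤ subsum a f :=
  tsum_nonneg fun n => by split_ifs <;> simp [ha0]

lemma rem_eq_tsum_add (n : ℕ) : rem a n = ∑' i, a (i + (n + 1)) :=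
  tsum_congr fun i => congrArg a (by omega)

lemma rem_shift (N n : ℕ) : rem (fun i => a (i + N)) n = rem a (n + N) :=
  tsum_congr fun i => congrArg a (by omega)

lemma subsum_shift_le_rem (ha : Summable a) (ha0 : ∀ n, 0 ≤ a n) (f : ℕ → Bool) (n : ℕ) :
    subsum (fun i => a (i + (n + 1))) f ≤ rem a n := by
  rw [rem_eq_tsum_add]
  have ha' := (summable_nat_add_iff (n + 1)).2 ha
  exact (summable_ite_bool ha' f).tsum_le_tsum (fun i => by split_ifs <;> simp [ha0]) ha'

lemma tendsto_rem_atTop_zero : Tendsto (rem a) atTop (𝓝 0) := by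
  simp only [funext (rem_eq_tsum_add (a := a))]
  exact (tendsto_sum_nat_add a).comp (tendsto_add_atTop_nat 1)

lemma achSet_subset_iUnion_vadd_achSet_shift (ha : Summable a) (N : ℕ) :
    achSet a ⊆ ⋃ G : Finset ℕ, (∑ i ∈ G, a i) +ᵥ achSet fun n => a (n + N) := by
  rw [achSet_eq_range_subsum ha, achSet_eq_range_subsum ((summable_nat_add_iff N).2 ha)]
  rintro _ ⟨f, rfl⟩
  refine Set.mem_iUnion.2
    ⟨(range N).filter (f ·), Set.mem_vadd_set.2 ⟨_, ⟨fun n => f (n + N), rfl⟩, ?_⟩⟩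
  rw [subsum_eq_sum_range_add ha f N, sum_filter, vadd_eq_add]

lemma interior_achSet_eq_empty_of_shift (ha : Summable a) (N : ℕ)
    (h : interior (achSet fun n => a (n + N)) = ∅) : interior (achSet a) = ∅ := by
  have hclosed := (isCompact_achSet ((summable_nat_add_iff N).2 ha)).isClosed
  have hmeagre : IsMeagre (achSet a) :=
    (isMeagre_iUnion fun G : Finset ℕ => ((hclosed.vadd _).isNowhereDense_iff.2
      (by rw [interior_vadd, h, Set.vadd_set_empty])).isMeagre).mono
      (achSet_subset_iUnion_vadd_achSet_shift ha N)
  exact Set.not_nonempty_iff_eq_empty.1 fun hne =>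
    not_isMeagre_of_isOpen isOpen_interior hne (hmeagre.mono interior_subset)

end Subsum

def gapLower (m : ℕ) (g : ℕ → Bool) (n : ℕ) : Bool := if n < m then g n else decide (m < n)

def gapUpper (m : ℕ) (g : ℕ → Bool) (n : ℕ) : Bool := if n < m then g n else decide (n = m)

lemma toLex_le_gapLower_or_gapUpper_le (m : ℕ) (g f : ℕ → Bool) :
    toLex f ≤ toLex (gapLower m g) ∨ toLex (gapUpper m g) ≤ toLex f := by
  by_contra! h
  obtain ⟨⟨i, hi_eq, hi_lt⟩, ⟨j, hj_eq, hj_lt⟩⟩ := h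
  obtain ⟨hlo, hfi⟩ : gapLower m g i = false ∧ f i = true := Bool.lt_iff.1 hi_lt
  obtain ⟨hfj, hup⟩ : f j = false ∧ gapUpper m g j = true := Bool.lt_iff.1 hj_lt
  rcases lt_trichotomy i j with hij | rfl | hji
  · have : f i = gapUpper m g i := hj_eq i hij
    grind [gapLower, gapUpper]
  · simp_all
  · have : gapLower m g j = f j := hi_eq j hji
    grind [gapLower, gapUpper]

section QuicklyConvergent

variable {b : ℕ → ℝ}

lemma strictMono_subsum_toLex (hb : Summable b) (hb0 : ∀ n, 0 ≤ b n)
    (hr : ∀ n, rem b n < b n) : StrictMono (subsum b ∘ ofLex) := by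
  rintro f g ⟨i, hagree, hfg⟩
  obtain ⟨f, rfl⟩ := toLex.surjective f
  obtain ⟨g, rfl⟩ := toLex.surjective g
  obtain ⟨hfi, hgi⟩ : f i = false ∧ g i = true := Bool.lt_iff.1 hfg
  have hprefix : ∑ n ∈ range i, (if f n then b n else 0)
      = ∑ n ∈ range i, (if g n then b n else 0) :=
    sum_congr rfl fun n hn => by rw [show f n = g n from hagree n (mem_range.1 hn)]
  have hf_tail := subsum_shift_le_rem hb hb0 (fun n => f (n + (i + 1))) i
  have hg_tail := subsum_nonneg (fun n => hb0 (n + (i + 1))) (fun n => g (n + (i + 1)))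
  simp only [Function.comp_apply, ofLex_toLex]
  rw [subsum_eq_sum_range_add hb _ (i + 1), subsum_eq_sum_range_add hb _ (i + 1),
    sum_range_succ, sum_range_succ, hprefix, hfi, hgi]
  simp only [Bool.false_eq_true, if_false, if_true]
  linarith [hr i]

lemma subsum_gapLower (hb : Summable b) (m : ℕ) (g : ℕ → Bool) :
    subsum b (gapLower m g) = ∑ n ∈ range m, (if g n then b n else 0) + rem b m := by
  rw [subsum_eq_sum_range_add hb _ (m + 1), sum_range_succ, rem_eq_tsum_add]
  have hprefix : ∑ n ∈ range m, (if gapLower m g n then b n else 0)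
      = ∑ n ∈ range m, (if g n then b n else 0) :=
    sum_congr rfl fun n hn => by simp [gapLower, mem_range.1 hn]
  have htail : (fun n => gapLower m g (n + (m + 1))) = fun _ => true := by
    ext n
    simp [gapLower, show ¬n + (m + 1) < m by omega, show m < n + (m + 1) by omega]
  rw [hprefix, htail]
  simp [gapLower, subsum]

lemma subsum_gapUpper (hb : Summable b) (m : ℕ) (g : ℕ → Bool) :
    subsum b (gapUpper m g) = ∑ n ∈ range m, (if g n then b n else 0) + b m := by
  rw [subsum_eq_sum_range_add hb _ (m + 1), sum_range_succ]
  have hprefix : ∑ n ∈ range m, (if gapUpper m g n then b n else 0)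
      = ∑ n ∈ range m, (if g n then b n else 0) :=
    sum_congr rfl fun n hn => by simp [gapUpper, mem_range.1 hn]
  have htail : (fun n => gapUpper m g (n + (m + 1))) = fun _ => false := by
    ext n
    simp [gapUpper, show ¬n + (m + 1) < m by omega, show n + (m + 1) ≠ m by omega]
  rw [hprefix, htail]
  simp [gapUpper, subsum]

lemma notMem_achSet_of_mem_Ioo (hb : Summable b) (hb0 : ∀ n, 0 ≤ b n)
    (hr : ∀ n, rem b n < b n) (m : ℕ) (g : ℕ → Bool) {x : ℝ}
    (hx : x ∈ Set.Ioo (∑ n ∈ range m, (if g n then b n else 0) + rem b m)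
      (∑ n ∈ range m, (if g n then b n else 0) + b m)) : x ∉ achSet b := by
  rw [achSet_eq_range_subsum hb]
  rintro ⟨f, rfl⟩
  have hmono := (strictMono_subsum_toLex hb hb0 hr).monotone
  rcases toLex_le_gapLower_or_gapUpper_le m g f with h | h
  · have := hmono h
    simp only [Function.comp_apply, ofLex_toLex, subsum_gapLower hb] at this
    exact hx.1.not_ge this
  · have := hmono h
    simp only [Function.comp_apply, ofLex_toLex, subsum_gapUpper hb] at this
    exact hx.2.not_ge this

theorem interior_achSet_eq_empty_of_rem_lt (hb : Summable b) (hb0 : ∀ n, 0 ≤ b n)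
    (hr : ∀ n, rem b n < b n) : interior (achSet b) = ∅ := by
  refine Set.eq_empty_of_forall_notMem fun x hx => ?_
  obtain ⟨g, rfl⟩ : x ∈ Set.range (subsum b) := achSet_eq_range_subsum hb ▸ interior_subset hx
  have hmid : Tendsto (fun m => ∑ n ∈ range m, (if g n then b n else 0) + (rem b m + b m) / 2)
      atTop (𝓝 (subsum b g)) := by
    simpa [subsum] using (summable_ite_bool hb g).hasSum.tendsto_sum_nat.add
      ((tendsto_rem_atTop_zero.add hb.tendsto_atTop_zero).div_const 2)
  obtain ⟨m, hm⟩ := (hmid.eventually (mem_interior_iff_mem_nhds.1 hx)).exists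
  exact notMem_achSet_of_mem_Ioo hb hb0 hr m g ⟨by linarith [hr m], by linarith [hr m]⟩ hm

end QuicklyConvergent

theorem kakeya_cantor_general (a : ℕ → ℝ) (hpos : ∀ n, 0 < a n)
    (hsum : Summable a) (hfin : {n | a n ≤ rem a n}.Finite) :
    interior (achSet a) = ∅ := by
  obtain ⟨N, hN⟩ : ∃ N, ∀ n ≥ N, rem a n < a n := by
    have h := hfin.eventually_cofinite_notMem
    rw [Nat.cofinite_eq_atTop, eventually_atTop] at h
    simpa using h
  refine interior_achSet_eq_empty_of_shift hsum N
    (interior_achSet_eq_empty_of_rem_lt ((summable_nat_add_iff N).2 hsum)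
      (fun n => (hpos _).le) fun n => ?_)
  rw [rem_shift]
  exact hN _ (Nat.le_add_left N n)

/-- Kakeya: if `a n ≤ r n` for only finitely many `n`, then the achievement set
has empty interior (is nowhere dense). -/
theorem kakeya_cantor (a : ℕ → ℝ) (hpos : ∀ n, 0 < a n) (hmono : Antitone a)
    (hsum : Summable a) (hfin : {n | a n ≤ rem a n}.Finite) :
    interior (achSet a) = ∅ :=
  kakeya_cantor_general a hpos hsum hfin
end

section
/- Fix n ∈ ℕ, n ≥ 1, and define b_1 := 2^{n+1}, b_2 := 2^n + 1, and b_j := 2^{n+3-j} for 3 ≤ j ≤ n+2. Then the set of all subsums { ∑_{j∈A} b_j : A ⊆ {1,…,n+2} } equals {2j−2 : 1 ≤ j ≤ 2^{n−1}} ∪ {j : 2^n ≤ j ≤ 4·2^n − 1} ∪ {4·2^n − 1 + 2j : 1 ≤ j ≤ 2^{n−1}}. -/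
/-!
The numbers `b 3, …, b (n + 2)` are `2 * 2 ^ i` for `i < n`, so by binary expansion their subsums
are exactly the even numbers `2 * m` with `m < 2 ^ n`. Optionally adding `b 2 = 2 ^ n + 1` and
`b 1 = 2 ^ (n + 1)` produces four translates of this set of evens; together they cover every
integer of `[2 ^ n, 4 * 2 ^ n - 1]`, and outside it only the small evens of the untranslated copy
and the large odds of the copy translated by `b 1 + b 2` remain.
-/

open Finset

def subsums {ι M : Type*} [AddCommMonoid M] (s : Finset ι) (f : ι → M) : Set M :=
  {x | ∃ A ⊆ s, x = ∑ j ∈ A, f j}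

section Subsums

variable {ι κ M : Type*} [AddCommMonoid M] {s : Finset ι} {f g : ι → M}

theorem subsums_insert [DecidableEq ι] {a : ι} (ha : a ∉ s) :
    subsums (insert a s) f = subsums s f ∪ (f a + ·) '' subsums s f := by
  ext x
  constructor
  · rintro ⟨A, hA, rfl⟩
    rw [subset_insert_iff] at hA
    by_cases haA : a ∈ A
    · exact Or.inr ⟨_, ⟨A.erase a, hA, rfl⟩, add_sum_erase A f haA⟩
    · exact Or.inl ⟨A, by rwa [erase_eq_of_notMem haA] at hA, rfl⟩
  · rintro (⟨A, hA, rfl⟩ | ⟨_, ⟨A, hA, rfl⟩, rfl⟩)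
    · exact ⟨A, hA.trans (subset_insert a s), rfl⟩
    · refine ⟨insert a A, insert_subset_insert a hA, ?_⟩
      rw [sum_insert fun h => ha (hA h)]

theorem subsums_congr (h : ∀ j ∈ s, f j = g j) : subsums s f = subsums s g := by
  ext x
  constructor <;> rintro ⟨A, hA, rfl⟩ <;> refine ⟨A, hA, sum_congr rfl fun j hj => ?_⟩
  exacts [h j (hA hj), (h j (hA hj)).symm]

theorem subsums_image [DecidableEq ι] {t : Finset κ} {e : κ → ι} (he : Set.InjOn e t) :
    subsums (t.image e) f = subsums t (f ∘ e) := by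
  ext x
  constructor
  · rintro ⟨A, hA, rfl⟩
    obtain ⟨B, hB, rfl⟩ := subset_image_iff.1 hA
    exact ⟨B, hB, sum_image (he.mono hB)⟩
  · rintro ⟨B, hB, rfl⟩
    exact ⟨B.image e, image_subset_image hB, (sum_image (he.mono hB)).symm⟩

theorem subsums_mul_left {R : Type*} [NonUnitalNonAssocSemiring R] (c : R) (f : ι → R) :
    subsums s (fun j => c * f j) = (c * ·) '' subsums s f := by
  ext x
  constructor
  · rintro ⟨A, hA, rfl⟩
    exact ⟨_, ⟨A, hA, rfl⟩, mul_sum A f c⟩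
  · rintro ⟨_, ⟨A, hA, rfl⟩, rfl⟩
    exact ⟨A, hA, mul_sum A f c⟩

end Subsums

theorem subsums_range_two_pow (n : ℕ) : subsums (range n) (2 ^ ·) = Set.Iio (2 ^ n) := by
  ext m
  constructor
  · rintro ⟨A, hA, rfl⟩
    exact Nat.geomSum_lt le_rfl fun i hi => mem_range.1 (hA hi)
  · intro hm
    refine ⟨m.bitIndices.toFinset, fun i hi => ?_, (sum_toFinset_bitIndices_two_pow m).symm⟩
    have := Nat.two_pow_le_of_mem_bitIndices (List.mem_toFinset.1 hi)
    exact mem_range.2 ((Nat.pow_lt_pow_iff_right one_lt_two).1 (this.trans_lt hm))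

theorem Icc_three_eq_image_range (n : ℕ) :
    Icc 3 (n + 2) = (range n).image (n + 2 - ·) := by
  ext j
  simp only [mem_Icc, mem_image, mem_range]
  exact ⟨fun h => ⟨n + 2 - j, by omega, by omega⟩, by rintro ⟨i, hi, rfl⟩; omega⟩

theorem subsums_Icc_three {n : ℕ} {b : ℕ → ℕ}
    (hbj : ∀ j, 3 ≤ j → j ≤ n + 2 → b j = 2 ^ (n + 3 - j)) :
    subsums (Icc 3 (n + 2)) b = (2 * ·) '' Set.Iio (2 ^ n) := by
  have hinj : Set.InjOn (n + 2 - ·) (range n : Set ℕ) := by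
    intro i hi i' hi' h
    simp only [coe_range, Set.mem_Iio] at hi hi'
    simp only at h
    omega
  rw [Icc_three_eq_image_range, subsums_image hinj, ← subsums_range_two_pow, ← subsums_mul_left]
  refine subsums_congr fun i hi => ?_
  have hi : i < n := mem_range.1 hi
  rw [Function.comp_apply, hbj _ (by omega) (by omega), show n + 3 - (n + 2 - i) = i + 1 by omega,
    pow_succ, mul_comm]

theorem union_translates_even_Iio_two_pow {n : ℕ} (hn : 1 ≤ n) :
    let E := (2 * ·) '' Set.Iio (2 ^ n)
    let S := E ∪ (2 ^ n + 1 + ·) '' E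
    S ∪ (2 ^ (n + 1) + ·) '' S =
      {x : ℕ | ∃ j, 1 ≤ j ∧ j ≤ 2 ^ (n - 1) ∧ x = 2 * j - 2}
      ∪ {x : ℕ | 2 ^ n ≤ x ∧ x ≤ 4 * 2 ^ n - 1}
      ∪ {x : ℕ | ∃ j, 1 ≤ j ∧ j ≤ 2 ^ (n - 1) ∧ x = 4 * 2 ^ n - 1 + 2 * j} := by
  obtain ⟨k, rfl⟩ : ∃ k, n = k + 1 := ⟨n - 1, by omega⟩
  have hP : 1 ≤ 2 ^ k := Nat.one_le_two_pow
  simp only [Nat.add_sub_cancel, pow_succ, Set.image_union, Set.image_image]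
  generalize 2 ^ k = P at hP ⊢
  ext x
  simp only [Set.mem_union, Set.mem_image, Set.mem_Iio, Set.mem_ofPred_eq]
  constructor
  · rintro ((⟨m, hm, rfl⟩ | ⟨m, hm, rfl⟩) | (⟨m, hm, rfl⟩ | ⟨m, hm, rfl⟩))
    · by_cases hmP : m < P
      · exact Or.inl (Or.inl ⟨m + 1, by omega, by omega, by omega⟩)
      · exact Or.inl (Or.inr (by omega))
    · exact Or.inl (Or.inr (by omega))
    · exact Or.inl (Or.inr (by omega))
    · by_cases hx : m < P
      · exact Or.inl (Or.inr (by omega))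
      · exact Or.inr ⟨m + 1 - P, by omega, by omega, by omega⟩
  · rintro ((⟨j, hj1, hjP, rfl⟩ | ⟨hx1, hx2⟩) | ⟨j, hj1, hjP, rfl⟩)
    · exact Or.inl (Or.inl ⟨j - 1, by omega, by omega⟩)
    · rcases Nat.even_or_odd' x with ⟨m, rfl | rfl⟩
      · by_cases hm : m < P * 2
        · exact Or.inl (Or.inl ⟨m, hm, rfl⟩)
        · exact Or.inr (Or.inl ⟨m - P * 2, by omega, by omega⟩)
      · by_cases hm : m < P * 3
        · exact Or.inl (Or.inr ⟨m - P, by omega, by omega⟩)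
        · exact Or.inr (Or.inr ⟨m - P * 3, by omega, by omega⟩)
    · exact Or.inr (Or.inr ⟨j - 1 + P, by omega, by omega⟩)

/-- The set of subsums of the group `b 1 = 2^(n+1)`, `b 2 = 2^n + 1`,
`b j = 2^(n+3-j)` for `3 ≤ j ≤ n+2`. -/
theorem subsums_of_group (n : ℕ) (hn : 1 ≤ n) (b : ℕ → ℕ)
    (hb1 : b 1 = 2 ^ (n + 1)) (hb2 : b 2 = 2 ^ n + 1)
    (hbj : ∀ j, 3 ≤ j → j ≤ n + 2 → b j = 2 ^ (n + 3 - j)) :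
    {x : ℕ | ∃ A ⊆ Finset.Icc 1 (n + 2), x = ∑ j ∈ A, b j} =
      {x : ℕ | ∃ j, 1 ≤ j ∧ j ≤ 2 ^ (n - 1) ∧ x = 2 * j - 2}
      ∪ {x : ℕ | 2 ^ n ≤ x ∧ x ≤ 4 * 2 ^ n - 1}
      ∪ {x : ℕ | ∃ j, 1 ≤ j ∧ j ≤ 2 ^ (n - 1) ∧ x = 4 * 2 ^ n - 1 + 2 * j} := by
  have hIcc : Icc 1 (n + 2) = insert 1 (insert 2 (Icc 3 (n + 2))) := by
    ext j
    simp only [mem_Icc, mem_insert]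
    omega
  change subsums (Icc 1 (n + 2)) b = _
  rw [hIcc, subsums_insert (by simp), subsums_insert (by simp), subsums_Icc_three hbj, hb1, hb2]
  exact union_translates_even_Iio_two_pow hn
end

section
/- In the Marchwicki–Miska construction (with (a_i), (q_k), N_k as above and r_i = ∑_{j>i} a_j), the set K^c := { i : a_i ≤ r_i } equals ⋃_{k≥1} { N_{k-1}+1, N_{k-1}+2 }; equivalently, a_i > r_i exactly for the indices i with N_{k-1}+3 ≤ i ≤ N_k for some k. -/
/-!
Write `R_k = r_{N_k}` for the remainder after the `k`-th group. A group with parameters `n, q`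
sums to `(5 * 2^n - 1) q`, and `q_k = 3 * 2^{n_{k+1}} q_{k+1}`; bounding partial sums group by
group gives `R_k ≤ 2 q_k`, and peeling off one more group sharpens this to `q_k < R_k < 2 q_k`
(strictly, because `n_{k+1} ≥ 1`). Inside group `k + 1` the remainder after an entry is
`q_{k+1}` times the sum of the later entries of `b^n`, plus `R_{k+1}`. From the third entry on
the entries halve down to `2`, so that sum is the entry minus `2`, and `R_{k+1} < 2 q_{k+1}`
makes `a_i > r_i`; for the first two entries the later ones fall short of `a_i` by at most
`q_{k+1} < R_{k+1}`.
-/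

/-- The terms of the basic group: `b^n_1 = 2^(n+1)`, `b^n_2 = 2^n + 1`,
`b^n_j = 2^(n+3-j)` for `3 ≤ j ≤ n+2`. -/
def mmB (n j : ℕ) : ℕ :=
  if j = 1 then 2 ^ (n + 1) else if j = 2 then 2 ^ n + 1 else 2 ^ (n + 3 - j)

open Finset

def blockTail (n j : ℕ) : ℝ := ∑ i ∈ range (n + 2 - j), (mmB n (j + 1 + i) : ℝ)

lemma mmB_one (n : ℕ) : mmB n 1 = 2 ^ (n + 1) := by simp [mmB]

lemma mmB_two (n : ℕ) : mmB n 2 = 2 ^ n + 1 := by simp [mmB]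

lemma mmB_of_three_le {n j : ℕ} (hj : 3 ≤ j) : mmB n j = 2 ^ (n + 3 - j) := by
  unfold mmB
  rw [if_neg (by omega), if_neg (by omega)]

lemma blockTail_eq_add {n j : ℕ} (hj : j < n + 2) :
    blockTail n j = mmB n (j + 1) + blockTail n (j + 1) := by
  obtain ⟨t, ht⟩ : ∃ t, n + 2 - j = t + 1 := ⟨n + 1 - j, by omega⟩
  rw [blockTail, blockTail, ht, sum_range_succ', show n + 2 - (j + 1) = t by omega, add_comm]
  congr 1
  exact sum_congr rfl fun i _ => by rw [show j + 1 + (i + 1) = j + 1 + 1 + i by omega]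

lemma blockTail_add_two {n j : ℕ} (h2 : 2 ≤ j) (hj : j ≤ n + 2) :
    blockTail n j + 2 = 2 ^ (n + 3 - j) := by
  obtain ⟨d, hd⟩ : ∃ d, j + d = n + 2 := ⟨n + 2 - j, by omega⟩
  induction d generalizing j with
  | zero => simp [blockTail, show n + 2 - j = 0 by omega, show n + 3 - j = 1 by omega]
  | succ d ih =>
    rw [blockTail_eq_add (by omega), mmB_of_three_le (by omega), add_assoc,
      ih (by omega) (by omega) (by omega), show n + 3 - j = n + 3 - (j + 1) + 1 by omega]
    push_cast
    ring

lemma blockTail_one (n : ℕ) : blockTail n 1 = 3 * 2 ^ n - 1 := by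
  have h := blockTail_add_two (n := n) le_rfl (by omega)
  rw [show n + 3 - 2 = n + 1 by omega] at h
  rw [blockTail_eq_add (by omega), mmB_two]
  push_cast
  linarith [pow_succ (2 : ℝ) n]

lemma blockTail_zero (n : ℕ) : blockTail n 0 = 5 * 2 ^ n - 1 := by
  rw [blockTail_eq_add (by omega), mmB_one, blockTail_one]
  push_cast
  ring

lemma mmB_mul_le_blockTail_mul_add_iff {n j : ℕ} {c R : ℝ} (hn : 1 ≤ n) (hj1 : 1 ≤ j)
    (hj : j ≤ n + 2) (hcR : c < R) (hRc : R < 2 * c) :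
    (mmB n j : ℝ) * c ≤ blockTail n j * c + R ↔ j ≤ 2 := by
  have hc : 0 < c := by linarith
  have h2n : (2 : ℝ) ≤ 2 ^ n := by
    simpa using pow_le_pow_right₀ (by norm_num : (1 : ℝ) ≤ 2) hn
  constructor
  · intro h
    by_contra! h3
    have := blockTail_add_two (by omega) hj
    rw [mmB_of_three_le h3] at h
    push_cast at h
    nlinarith
  · intro h2
    obtain rfl | rfl : j = 1 ∨ j = 2 := by omega
    · rw [mmB_one, blockTail_one]
      push_cast
      nlinarith [pow_succ (2 : ℝ) n]
    · have := blockTail_add_two (n := n) le_rfl (by omega)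
      rw [show n + 3 - 2 = n + 1 by omega] at this
      rw [mmB_two]
      push_cast
      nlinarith [pow_succ (2 : ℝ) n]

lemma rem_eq_sum_add_rem {a : ℕ → ℝ} (ha : Summable a) (m t : ℕ) :
    rem a m = ∑ i ∈ range t, a (m + 1 + i) + rem a (m + t) := by
  have hs : Summable fun i => a (m + 1 + i) := by
    simpa only [add_comm] using (summable_nat_add_iff (m + 1)).mpr ha
  rw [rem, rem, ← hs.sum_add_tsum_nat_add t]
  congr 1
  exact tsum_congr fun i => by rw [show m + 1 + (i + t) = m + t + 1 + i by omega]

lemma rem_nonneg {a : ℕ → ℝ} {m : ℕ} (ha : ∀ i, m < i → 0 ≤ a i) : 0 ≤ rem a m :=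
  tsum_nonneg fun i => ha _ (by omega)

structure IsMMConstruction (n N : ℕ → ℕ) (q a : ℕ → ℝ) : Prop where
  N_zero : N 0 = 0
  N_succ : ∀ k, N (k + 1) = N k + (n (k + 1) + 2)
  q_one : q 1 = 1
  q_succ : ∀ k, 1 ≤ k → q (k + 1) = q k / (3 * 2 ^ n (k + 1))
  a_N_add : ∀ k i, 1 ≤ i → i ≤ n (k + 1) + 2 →
    a (N k + i) = (mmB (n (k + 1)) i : ℝ) * q (k + 1)

namespace IsMMConstruction

variable {n N : ℕ → ℕ} {q a : ℕ → ℝ}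

lemma q_pos (h : IsMMConstruction n N q a) {k : ℕ} (hk : 1 ≤ k) : 0 < q k := by
  induction k, hk using Nat.le_induction with
  | base => simp [h.q_one]
  | succ k hk ih => rw [h.q_succ k hk]; positivity

lemma q_eq_mul_q_succ (h : IsMMConstruction n N q a) {k : ℕ} (hk : 1 ≤ k) :
    q k = 3 * 2 ^ n (k + 1) * q (k + 1) := by
  rw [h.q_succ k hk]
  field_simp

lemma exists_eq_N_add (h : IsMMConstruction n N q a) {i : ℕ} (hi : 1 ≤ i) :
    ∃ k j, 1 ≤ j ∧ j ≤ n (k + 1) + 2 ∧ i = N k + j := by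
  have hmono : StrictMono N := strictMono_nat_of_lt_succ fun k => by rw [h.N_succ]; omega
  obtain ⟨k, hk, hk'⟩ := hmono.exists_between_of_tendsto_atTop hmono.tendsto_atTop
    (x := i) (by rw [h.N_zero]; omega)
  rw [h.N_succ] at hk'
  exact ⟨k, i - N k, by omega, by omega, by omega⟩

lemma a_pos (h : IsMMConstruction n N q a) {i : ℕ} (hi : 1 ≤ i) : 0 < a i := by
  obtain ⟨k, j, hj1, hj, rfl⟩ := h.exists_eq_N_add hi
  rw [h.a_N_add k j hj1 hj]
  exact mul_pos (by exact_mod_cast Nat.pos_of_ne_zero (by unfold mmB; split_ifs <;> positivity))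
    (h.q_pos (by omega))

lemma sum_block (h : IsMMConstruction n N q a) (k : ℕ) {j : ℕ} (hj : j ≤ n (k + 1) + 2) :
    ∑ i ∈ range (n (k + 1) + 2 - j), a (N k + j + 1 + i) =
      blockTail (n (k + 1)) j * q (k + 1) := by
  rw [blockTail, sum_mul]
  exact sum_congr rfl fun i hi => by
    rw [mem_range] at hi
    rw [show N k + j + 1 + i = N k + (j + 1 + i) by omega]
    exact h.a_N_add k _ (by omega) (by omega)

-- For `k ≥ 1` the bound is `2 * q k`; written through `q (k + 1)` it also covers `k = 0`.
lemma sum_range_le (h : IsMMConstruction n N q a) (M k : ℕ) :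
    ∑ i ∈ range M, a (N k + 1 + i) ≤ 6 * 2 ^ n (k + 1) * q (k + 1) := by
  induction M using Nat.strong_induction_on generalizing k with
  | _ M ih =>
  have hblock := h.sum_block k (Nat.zero_le _)
  rw [Nat.sub_zero, add_zero, blockTail_zero] at hblock
  have hq := h.q_pos (k := k + 1) (by omega)
  have hpow : (1 : ℝ) ≤ 2 ^ n (k + 1) := one_le_pow₀ (by norm_num)
  by_cases hM : M ≤ n (k + 1) + 2
  · calc ∑ i ∈ range M, a (N k + 1 + i)
        ≤ ∑ i ∈ range (n (k + 1) + 2), a (N k + 1 + i) :=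
          sum_le_sum_of_subset_of_nonneg (range_subset_range.mpr hM)
            fun i _ _ => (h.a_pos (by omega)).le
      _ ≤ 6 * 2 ^ n (k + 1) * q (k + 1) := by rw [hblock]; nlinarith
  · obtain ⟨M', rfl⟩ : ∃ M', M = n (k + 1) + 2 + M' := ⟨M - (n (k + 1) + 2), by omega⟩
    have hnext : ∑ i ∈ range M', a (N k + 1 + (n (k + 1) + 2 + i))
        ≤ 6 * 2 ^ n (k + 2) * q (k + 2) := by
      convert ih M' (by omega) (k + 1) using 3 with i
      rw [h.N_succ]; omega
    rw [sum_range_add, hblock]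
    rw [show 6 * 2 ^ n (k + 2) * q (k + 2) = 2 * q (k + 1) by
      rw [h.q_eq_mul_q_succ (k := k + 1) (by omega)]; ring] at hnext
    nlinarith

lemma summable (h : IsMMConstruction n N q a) : Summable a := by
  refine (summable_nat_add_iff 1).mp (summable_of_sum_range_le (c := 6 * 2 ^ n 1 * q 1)
    (fun i => (h.a_pos (by omega)).le) fun M => ?_)
  simpa [h.N_zero, add_comm] using h.sum_range_le M 0

lemma rem_eq_blockTail (h : IsMMConstruction n N q a) (k : ℕ) {j : ℕ}
    (hj : j ≤ n (k + 1) + 2) :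
    rem a (N k + j) = blockTail (n (k + 1)) j * q (k + 1) + rem a (N (k + 1)) := by
  rw [rem_eq_sum_add_rem h.summable _ (n (k + 1) + 2 - j), h.sum_block k hj, h.N_succ]
  congr 2
  omega

lemma rem_le (h : IsMMConstruction n N q a) {k : ℕ} (hk : 1 ≤ k) : rem a (N k) ≤ 2 * q k := by
  have hs : Summable fun i => a (N k + 1 + i) := by
    simpa only [add_comm] using (summable_nat_add_iff (N k + 1)).mpr h.summable
  rw [h.q_eq_mul_q_succ hk]
  exact hs.tsum_le_of_sum_range_le fun M => (h.sum_range_le M k).trans_eq (by ring)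

lemma q_lt_rem (h : IsMMConstruction n N q a) (k : ℕ) : q (k + 1) < rem a (N (k + 1)) := by
  have hR := h.rem_eq_blockTail (k + 1) (j := 0) (by omega)
  rw [add_zero, blockTail_zero] at hR
  have := rem_nonneg (a := a) (m := N (k + 2)) fun i hi => (h.a_pos (by omega)).le
  have hq := h.q_pos (k := k + 2) (by omega)
  rw [hR, h.q_eq_mul_q_succ (k := k + 1) (by omega)]
  nlinarith [one_le_pow₀ (M₀ := ℝ) (a := 2) (n := n (k + 2)) (by norm_num)]

lemma rem_lt (h : IsMMConstruction n N q a) (hn : ∀ k, 1 ≤ k → 1 ≤ n k) (k : ℕ) :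
    rem a (N (k + 1)) < 2 * q (k + 1) := by
  have hR := h.rem_eq_blockTail (k + 1) (j := 0) (by omega)
  rw [add_zero, blockTail_zero] at hR
  have hnext := h.rem_le (k := k + 2) (by omega)
  have hq := h.q_pos (k := k + 2) (by omega)
  have h2n : (2 : ℝ) ≤ 2 ^ n (k + 2) := by
    simpa using pow_le_pow_right₀ (by norm_num : (1 : ℝ) ≤ 2) (hn (k + 2) (by omega))
  rw [hR, h.q_eq_mul_q_succ (k := k + 1) (by omega)]
  nlinarith

lemma a_le_rem_iff (h : IsMMConstruction n N q a) (hn : ∀ k, 1 ≤ k → 1 ≤ n k) (k : ℕ)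
    {j : ℕ} (hj1 : 1 ≤ j) (hj : j ≤ n (k + 1) + 2) :
    a (N k + j) ≤ rem a (N k + j) ↔ j ≤ 2 := by
  rw [h.a_N_add k j hj1 hj, h.rem_eq_blockTail k hj]
  exact mmB_mul_le_blockTail_mul_add_iff (hn (k + 1) (by omega)) hj1 hj (h.q_lt_rem k)
    (h.rem_lt hn k)

end IsMMConstruction

/-- In the Marchwicki–Miska construction, the reversed Kakeya conditions `a i ≤ r i`
hold exactly at the first two indices of each group. -/
theorem mm_reversed_kakeya (n N : ℕ → ℕ) (q a : ℕ → ℝ)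
    (hn : ∀ k, 1 ≤ k → 1 ≤ n k)
    (hN0 : N 0 = 0) (hN : ∀ k, N (k + 1) = N k + (n (k + 1) + 2))
    (hq1 : q 1 = 1) (hq : ∀ k, 1 ≤ k → q (k + 1) = q k / (3 * 2 ^ n (k + 1)))
    (ha : ∀ k i, 1 ≤ i → i ≤ n (k + 1) + 2 →
      a (N k + i) = (mmB (n (k + 1)) i : ℝ) * q (k + 1)) :
    {i : ℕ | 1 ≤ i ∧ a i ≤ rem a i} = ⋃ k : ℕ, ({N k + 1, N k + 2} : Set ℕ) := by
  have h : IsMMConstruction n N q a := ⟨hN0, hN, hq1, hq, ha⟩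
  ext i
  simp only [Set.mem_ofPred_eq, Set.mem_iUnion, Set.mem_insert_iff, Set.mem_singleton_iff]
  constructor
  · rintro ⟨hi, hle⟩
    obtain ⟨k, j, hj1, hj, rfl⟩ := h.exists_eq_N_add hi
    have := (h.a_le_rem_iff hn k hj1 hj).mp hle
    exact ⟨k, by omega⟩
  · rintro ⟨k, rfl | rfl⟩
    · exact ⟨by omega, (h.a_le_rem_iff hn k le_rfl (by omega)).mpr (by omega)⟩
    · exact ⟨by omega, (h.a_le_rem_iff hn k (by omega) (by omega)).mpr le_rfl⟩
end

section
/- Let (n_k), (q_k), (N_k), (a_i) be as in the Marchwicki–Miska construction. Then for every k, Δ_{r_{N_k}} F_{N_k} ≥ ∑_{i=1}^k (3·2^{n_i} − 1) q_i, and consequently lim_{k→∞} Δ_{r_{N_k}} F_{N_k} ≥ 3·2^{n_1} − 1 > 0; hence E(a_i) contains an interval. -/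
/-- The finite set of subsums of the terms `a 1, …, a N`. -/
noncomputable def Fset (a : ℕ → ℝ) (N : ℕ) : Finset ℝ :=
  (Finset.Icc 1 N).powerset.image (fun A => ∑ i ∈ A, a i)

/-- A finite set `C ⊆ ℝ` is `ε`-close if any two consecutive elements differ
by at most `ε`. -/
def IsEpsClose (ε : ℝ) (C : Finset ℝ) : Prop :=
  ∀ x ∈ C, ∀ y ∈ C, x < y → (∀ z ∈ C, ¬(x < z ∧ z < y)) → y - x ≤ ε

/-- `Δ_ε B`: the largest stretch of an (maximal) `ε`-close subset of `B`. -/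
noncomputable def deltaEps (ε : ℝ) (B : Finset ℝ) : ℝ :=
  sSup {s | ∃ (C : Finset ℝ) (hC : C.Nonempty),
    C ⊆ B ∧ IsEpsClose ε C ∧ s = C.max' hC - C.min' hC}

/-! Every integer in `[2^n, 2^(n+2))` is a subsum of the basic group `b^n`. Since
`q (k+1) = q k / (3·2^(n (k+1)))`, this lets the arithmetic progression
`D_k = {∑_{i ≤ k} 2^(n i) q i + t q k : t < ∏_{i ≤ k} 3·2^(n i)}`
be refined group by group, so `D_k ⊆ F_{N k}`. Its step `q k` is below `r_{N k}` and its stretch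
telescopes to `3·2^(n 1) - q k = ∑_{i ≤ k} (3·2^(n i) - 1) q i`, which bounds
`Δ_{r_{N k}} F_{N k}` from below. All `D_k` cover `[2^(n 1) + 1, 4·2^(n 1) - 1]` with mesh
`q k → 0`, and the achievement set is closed, being a continuous image of the Cantor space
`ℕ → Bool`; so it contains that interval. -/

open Finset Filter Topology

section Subsums

variable {a : ℕ → ℝ}

lemma sum_mem_Fset {N : ℕ} {A : Finset ℕ} (hA : A ⊆ Icc 1 N) :
    ∑ i ∈ A, a i ∈ Fset a N :=
  mem_image_of_mem _ (mem_powerset.2 hA)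

lemma zero_mem_Fset (N : ℕ) : (0 : ℝ) ∈ Fset a N := by
  simpa using sum_mem_Fset (a := a) (empty_subset (Icc 1 N))

lemma add_mem_Fset {M m : ℕ} {x y : ℝ} (hx : x ∈ Fset a M)
    (hy : y ∈ Fset (fun j => a (M + j)) m) : x + y ∈ Fset a (M + m) := by
  obtain ⟨A, hA, rfl⟩ := mem_image.1 hx
  obtain ⟨B, hB, rfl⟩ := mem_image.1 hy
  rw [mem_powerset] at hA hB
  have hdisj : Disjoint A (B.image (M + ·)) := by
    refine disjoint_left.2 fun i hiA hiB => ?_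
    obtain ⟨j, hj, rfl⟩ := mem_image.1 hiB
    have := mem_Icc.1 (hA hiA)
    have := mem_Icc.1 (hB hj)
    omega
  have hsub : A ∪ B.image (M + ·) ⊆ Icc 1 (M + m) := by
    refine union_subset (hA.trans (Icc_subset_Icc_right (by omega))) fun i hi => ?_
    obtain ⟨j, hj, rfl⟩ := mem_image.1 hi
    have := mem_Icc.1 (hB hj)
    exact mem_Icc.2 (by omega)
  have := sum_mem_Fset (a := a) hsub
  rwa [sum_union hdisj, sum_image fun _ _ _ _ h => by omega] at this

lemma coe_Fset_subset_achSet (N : ℕ) : (Fset a N : Set ℝ) ⊆ achSet a := by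
  intro x hx
  obtain ⟨A, -, rfl⟩ := mem_image.1 hx
  have h := hasSum_sum_of_ne_finset_zero (L := .unconditional ℕ) (f := (A : Set ℕ).indicator a)
    fun i hi => Set.indicator_of_notMem hi a
  rw [sum_congr rfl fun i hi => Set.indicator_of_mem hi a] at h
  exact ⟨A, h⟩

lemma isClosed_achSet (ha : Summable fun i => ‖a i‖) : IsClosed (achSet a) := by
  let f : (ℕ → Bool) → ℝ := fun s => ∑' i, if s i then a i else 0
  have hf : Continuous f := continuous_tsum
    (fun i => (continuous_of_discreteTopology (f := fun b : Bool => if b then a i else 0)).comp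
      (continuous_apply i)) ha
    fun i s => by split_ifs <;> simp
  suffices achSet a = Set.range f from this ▸ (isCompact_range hf).isClosed
  ext x
  constructor
  · rintro ⟨A, hA⟩
    classical
    refine ⟨fun i => decide (i ∈ A), ?_⟩
    rw [← hA.tsum_eq]
    exact tsum_congr fun i => by by_cases hi : i ∈ A <;> simp [hi]
  · rintro ⟨s, rfl⟩
    refine ⟨{i | s i}, ?_⟩
    have hind : {i | s i}.indicator a = fun i => if s i then a i else 0 := by
      ext i
      by_cases hi : s i <;> simp [hi]
    rw [hind]
    exact (ha.of_norm_bounded fun i => by split_ifs <;> simp).hasSum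

end Subsums

lemma le_deltaEps {ε : ℝ} {B C : Finset ℝ} (hCB : C ⊆ B) (hC : IsEpsClose ε C)
    (hne : C.Nonempty) : C.max' hne - C.min' hne ≤ deltaEps ε B := by
  have hB : B.Nonempty := hne.mono hCB
  refine le_csSup ⟨B.max' hB - B.min' hB, ?_⟩ ⟨C, hne, hCB, hC, rfl⟩
  rintro s ⟨C', hC', hC'B, -, rfl⟩
  linarith [max'_subset hC' hC'B, min'_subset hC' hC'B]

lemma sum_Ioc_eq_sum_Icc_shift {M : Type*} [AddCommMonoid M] (f : ℕ → M) (c d : ℕ) :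
    ∑ m ∈ Ioc c (c + d), f m = ∑ j ∈ Icc 1 d, f (c + j) := by
  rw [← Icc_add_one_left_eq_Ioc, ← map_add_left_Icc, sum_map]
  rfl

section ArithProg

noncomputable def arithProg (L h : ℝ) (P : ℕ) : Finset ℝ :=
  (range P).image fun t : ℕ => L + t * h

variable {L h : ℝ} {P : ℕ}

@[simp]
lemma mem_arithProg {x : ℝ} : x ∈ arithProg L h P ↔ ∃ t < P, L + t * h = x := by
  simp [arithProg]

lemma isEpsClose_arithProg {ε : ℝ} (hh : 0 < h) (hε : h ≤ ε) :
    IsEpsClose ε (arithProg L h P) := by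
  intro x hx y hy hxy hgap
  obtain ⟨t, -, rfl⟩ := mem_arithProg.1 hx
  obtain ⟨u, hu, rfl⟩ := mem_arithProg.1 hy
  have htu : t < u := by exact_mod_cast (show (t : ℝ) < u by nlinarith)
  have hsucc : u = t + 1 := by
    by_contra hne
    have htu' : ((t + 1 : ℕ) : ℝ) < u := by exact_mod_cast (show t + 1 < u by omega)
    refine hgap (L + ((t + 1 : ℕ) : ℝ) * h) (mem_arithProg.2 ⟨t + 1, by omega, rfl⟩)
      ⟨?_, ?_⟩
    · push_cast; linarith
    · nlinarith
  subst hsucc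
  push_cast
  linarith

lemma arithProg_nonempty (hP : 0 < P) : (arithProg L h P).Nonempty :=
  ⟨L, mem_arithProg.2 ⟨0, hP, by simp⟩⟩

lemma arithProg_max'_sub_min' (hh : 0 ≤ h) (hP : 0 < P) :
    (arithProg L h P).max' (arithProg_nonempty hP) - (arithProg L h P).min' (arithProg_nonempty hP)
      = ((P : ℝ) - 1) * h := by
  have hmin : (arithProg L h P).min' (arithProg_nonempty hP) = L := by
    refine le_antisymm ?_ (le_min' _ _ _ fun y hy => ?_)
    · exact min'_le _ _ (mem_arithProg.2 ⟨0, hP, by simp⟩)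
    · obtain ⟨t, -, rfl⟩ := mem_arithProg.1 hy
      nlinarith [(t.cast_nonneg : (0 : ℝ) ≤ t)]
  have hmax : (arithProg L h P).max' (arithProg_nonempty hP) = L + ((P : ℝ) - 1) * h := by
    refine le_antisymm (max'_le _ _ _ fun y hy => ?_) ?_
    · obtain ⟨t, ht, rfl⟩ := mem_arithProg.1 hy
      have : (t : ℝ) ≤ P - 1 := by
        rw [le_sub_iff_add_le]; exact_mod_cast ht
      nlinarith
    · refine le_max' _ _ (mem_arithProg.2 ⟨P - 1, Nat.sub_one_lt_of_lt hP, ?_⟩)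
      rw [Nat.cast_sub hP, Nat.cast_one]
  rw [hmax, hmin]
  ring

lemma exists_mem_arithProg_abs_sub_lt {z : ℝ} (hh : 0 < h) (hLz : L ≤ z)
    (hz : z ≤ L + ((P : ℝ) - 1) * h) : ∃ x ∈ arithProg L h P, |z - x| < h := by
  set t := ⌊(z - L) / h⌋₊
  have hfloor : (t : ℝ) ≤ (z - L) / h := Nat.floor_le (div_nonneg (by linarith) hh.le)
  have hfloor' : (z - L) / h < t + 1 := Nat.lt_floor_add_one _
  rw [le_div_iff₀ hh] at hfloor
  rw [div_lt_iff₀ hh] at hfloor'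
  have htP : t < P := by
    have : (t : ℝ) < P := by nlinarith
    exact_mod_cast this
  refine ⟨L + t * h, mem_arithProg.2 ⟨t, htP, rfl⟩, ?_⟩
  rw [abs_lt]
  constructor <;> nlinarith

section BasicGroup

lemma mmB_add_two_sub {n e : ℕ} (he : e < n) : mmB n (n + 2 - e) = 2 ^ (e + 1) := by
  rw [mmB, if_neg (by omega), if_neg (by omega)]
  congr 1
  omega

lemma image_add_two_sub_range (n : ℕ) : (range n).image (n + 2 - ·) = Icc 3 (n + 2) := by
  ext j
  simp only [mem_image, mem_range, mem_Icc]
  constructor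
  · rintro ⟨e, he, rfl⟩
    omega
  · intro hj
    exact ⟨n + 2 - j, by omega, by omega⟩

lemma sum_mmB (n : ℕ) : ∑ j ∈ Icc 1 (n + 2), mmB n j = 5 * 2 ^ n - 1 := by
  have hsplit : Icc 1 (n + 2) = insert 1 (insert 2 (Icc 3 (n + 2))) := by
    ext j
    simp only [mem_insert, mem_Icc]
    omega
  have htail : ∑ j ∈ Icc 3 (n + 2), mmB n j = 2 * (2 ^ n - 1) := by
    rw [← image_add_two_sub_range, sum_image fun e he e' he' h => by
      have := mem_range.1 (mem_coe.1 he); have := mem_range.1 (mem_coe.1 he'); omega,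
      sum_congr rfl fun e he => mmB_add_two_sub (mem_range.1 he)]
    simp only [pow_succ, ← sum_mul, Nat.geomSum_eq le_rfl]
    omega
  rw [hsplit, sum_insert (by simp), sum_insert (by simp), htail]
  simp only [mmB, reduceIte, OfNat.ofNat_ne_one]
  have := Nat.one_le_two_pow (n := n)
  rw [pow_succ]
  omega

lemma exists_subset_sum_mmB_eq_two_mul {n m : ℕ} (hm : m < 2 ^ n) :
    ∃ T ⊆ Icc 3 (n + 2), ∑ j ∈ T, mmB n j = 2 * m := by
  have hS : m.bitIndices.toFinset ⊆ range n := fun e he =>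
    mem_range.2 ((Nat.pow_lt_pow_iff_right (by norm_num)).1
      ((Nat.two_pow_le_of_mem_bitIndices (List.mem_toFinset.1 he)).trans_lt hm))
  refine ⟨m.bitIndices.toFinset.image (n + 2 - ·),
    image_add_two_sub_range n ▸ image_subset_image hS, ?_⟩
  rw [sum_image fun e he e' he' h => by
      have := mem_range.1 (hS he); have := mem_range.1 (hS he'); omega,
    sum_congr rfl fun e he => mmB_add_two_sub (mem_range.1 (hS he))]
  simp only [pow_succ', ← mul_sum, sum_toFinset_bitIndices_two_pow]

/-- Write `c = ε₁ 2^(n+1) + ε₂ (2^n + 1) + 2m` with `ε₁, ε₂ ∈ {0, 1}`, `m < 2^n`, and expand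
`m` in binary. -/
lemma exists_subset_sum_mmB_eq {n c : ℕ} (hn : 1 ≤ n) (hc₁ : 2 ^ n ≤ c)
    (hc₂ : c < 2 ^ (n + 2)) :
    ∃ S ⊆ Icc 1 (n + 2), ∑ j ∈ S, mmB n j = c := by
  obtain ⟨P, hP, m, hm, rfl⟩ :
      ∃ P ⊆ ({1, 2} : Finset ℕ), ∃ m < 2 ^ n, c = ∑ j ∈ P, mmB n j + 2 * m := by
    have h₁ : mmB n 1 = 2 * 2 ^ n := by simp [mmB, pow_succ, mul_comm]
    have h₂ : mmB n 2 = 2 ^ n + 1 := by simp [mmB]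
    have h₄ : 2 ^ (n + 2) = 4 * 2 ^ n := by ring
    obtain ⟨r, hr⟩ : Even (2 ^ n) := (Nat.even_pow' (by omega)).2 even_two
    rcases Nat.even_or_odd c with ⟨m, hm⟩ | ⟨m, hm⟩
    · by_cases hc : c < 2 * 2 ^ n
      · exact ⟨∅, empty_subset _, m, by omega, by rw [sum_empty]; omega⟩
      · exact ⟨{1}, by simp, m - 2 ^ n, by omega, by rw [sum_singleton, h₁]; omega⟩
    · by_cases hc : c < 3 * 2 ^ n + 1
      · exact ⟨{2}, by simp, m - r, by omega, by rw [sum_singleton, h₂]; omega⟩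
      · exact ⟨{1, 2}, subset_refl _, m - r - 2 ^ n, by omega,
          by rw [sum_pair (by norm_num), h₁, h₂]; omega⟩
  obtain ⟨T, hT, hTsum⟩ := exists_subset_sum_mmB_eq_two_mul hm
  have hP' : ∀ j ∈ P, j = 1 ∨ j = 2 := fun j hj => by simpa using hP hj
  have hPT : Disjoint P T := disjoint_left.2 fun j hjP hjT => by
    have := mem_Icc.1 (hT hjT)
    have := hP' j hjP
    omega
  refine ⟨P ∪ T, union_subset (fun j hj => ?_) (hT.trans (Icc_subset_Icc_left (by omega))),
    ?_⟩
  · have := hP' j hj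
    exact mem_Icc.2 (by omega)
  · rw [sum_union hPT, hTsum]

end BasicGroup

namespace MarchwickiMiska

/- The progression `D_k` of the paper is `arithProg (gridStart n q k) (q k) (gridCount n k)`. -/

noncomputable def gridStart (n : ℕ → ℕ) (q : ℕ → ℝ) (k : ℕ) : ℝ :=
  ∑ i ∈ Icc 1 k, (2 : ℝ) ^ n i * q i

def gridCount (n : ℕ → ℕ) (k : ℕ) : ℕ :=
  ∏ i ∈ Icc 1 k, 3 * 2 ^ n i

section Construction

variable {n N : ℕ → ℕ} {q a : ℕ → ℝ}
  (hn : ∀ k, 1 ≤ k → 1 ≤ n k)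
  (hN : ∀ k, N (k + 1) = N k + (n (k + 1) + 2))
  (hq1 : q 1 = 1) (hq : ∀ k, 1 ≤ k → q (k + 1) = q k / (3 * 2 ^ n (k + 1)))
  (ha : ∀ k i, 1 ≤ i → i ≤ n (k + 1) + 2 →
    a (N k + i) = (mmB (n (k + 1)) i : ℝ) * q (k + 1))
  {k : ℕ}

include hq in
lemma mul_q_succ (hk : 1 ≤ k) : 3 * 2 ^ n (k + 1) * q (k + 1) = q k := by
  rw [hq k hk]
  field_simp

include hq1 hq in
lemma q_pos (hk : 1 ≤ k) : 0 < q k := by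
  induction k, hk using Nat.le_induction with
  | base => simp [hq1]
  | succ k hk ih => rw [hq k hk]; positivity

include hn hq1 hq in
lemma q_succ_le (hk : 1 ≤ k) : q (k + 1) ≤ q k / 6 := by
  have h2 : (2 : ℝ) ≤ 2 ^ n (k + 1) :=
    le_self_pow₀ (by norm_num) (by have := hn (k + 1); omega)
  have := mul_q_succ hq hk
  nlinarith [q_pos hq1 hq (by omega : 1 ≤ k + 1)]

include hn hq1 hq in
lemma q_le_pow (j : ℕ) : q (j + 1) ≤ (1 / 6) ^ j := by
  induction j with
  | zero => simp [hq1]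
  | succ j ih =>
    rw [pow_succ]
    linarith [q_succ_le hn hq1 hq (by omega : 1 ≤ j + 1)]

include hn hq1 hq in
lemma q_le_one (hk : 1 ≤ k) : q k ≤ 1 := by
  obtain ⟨j, rfl⟩ := Nat.exists_eq_add_of_le' hk
  exact (q_le_pow hn hq1 hq j).trans (pow_le_one₀ (by norm_num) (by norm_num))

include hn hq1 hq in
lemma tendsto_q : Tendsto q atTop (𝓝 0) := by
  rw [← tendsto_add_atTop_iff_nat 1]
  exact squeeze_zero (fun j => (q_pos hq1 hq (by omega)).le) (q_le_pow hn hq1 hq)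
    (tendsto_pow_atTop_nhds_zero_of_lt_one (by norm_num) (by norm_num))

include hq1 hq in
/-- The stretch telescopes, since `(3·2^(n (i+1)) - 1) q (i+1) = q i - q (i+1)`. -/
lemma sum_stretch (hk : 1 ≤ k) :
    ∑ i ∈ Icc 1 k, (3 * (2 : ℝ) ^ n i - 1) * q i = 3 * 2 ^ n 1 - q k := by
  induction k, hk using Nat.le_induction with
  | base => simp [hq1]
  | succ k hk ih =>
    rw [sum_Icc_succ_top (by omega), ih]
    linear_combination mul_q_succ hq hk

include hq1 hq in
lemma gridCount_mul_q (hk : 1 ≤ k) : (gridCount n k : ℝ) * q k = 3 * 2 ^ n 1 := by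
  induction k, hk using Nat.le_induction with
  | base => simp [gridCount, hq1]
  | succ k hk ih =>
    rw [gridCount, prod_Icc_succ_top (by omega), ← gridCount, Nat.cast_mul, mul_assoc]
    push_cast
    rw [mul_q_succ hq hk, ih]

include hn hN ha in
lemma add_mul_q_succ_mem_Fset {x : ℝ} {c : ℕ} (hx : x ∈ Fset a (N k))
    (hc₁ : 2 ^ n (k + 1) ≤ c) (hc₂ : c < 2 ^ (n (k + 1) + 2)) :
    x + c * q (k + 1) ∈ Fset a (N (k + 1)) := by
  obtain ⟨S, hS, hSc⟩ := exists_subset_sum_mmB_eq (hn (k + 1) (by omega)) hc₁ hc₂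
  have hsum : ∑ j ∈ S, a (N k + j) = c * q (k + 1) := by
    rw [sum_congr rfl fun j hj => ha k j (mem_Icc.1 (hS hj)).1 (mem_Icc.1 (hS hj)).2, ← sum_mul,
      ← Nat.cast_sum, hSc]
  rw [hN k, ← hsum]
  exact add_mem_Fset hx (sum_mem_Fset hS)

include hn hN hq ha in
/-- `D_{k+1}` refines `D_k`: writing `t = 3·2^(n (k+1)) s + r`, the point `t` of `D_{k+1}` is the
point `s` of `D_k` plus the subsum `(2^(n (k+1)) + r) q (k+1)` of the next group. -/
lemma arithProg_subset_Fset (hk : 1 ≤ k) :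
    arithProg (gridStart n q k) (q k) (gridCount n k) ⊆ Fset a (N k) := by
  intro x hx
  rw [mem_arithProg] at hx
  obtain ⟨t, ht, rfl⟩ := hx
  induction k, hk using Nat.le_induction generalizing t with
  | base =>
    have ht' : 2 ^ n 1 + t < 2 ^ (n 1 + 2) := by
      simp only [gridCount, Icc_self, prod_singleton] at ht
      rw [pow_add]
      omega
    have := add_mul_q_succ_mem_Fset hn hN ha (zero_mem_Fset (N 0)) le_self_add ht'
    convert this using 1
    rw [gridStart, Icc_self, sum_singleton, zero_add]
    push_cast
    ring
  | succ k hk ih =>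
    set b := 3 * 2 ^ n (k + 1)
    have hb : 0 < b := by positivity
    have hdiv : t / b < gridCount n k := by
      rw [Nat.div_lt_iff_lt_mul hb]
      rwa [gridCount, prod_Icc_succ_top (by omega)] at ht
    have hmod : 2 ^ n (k + 1) + t % b < 2 ^ (n (k + 1) + 2) := by
      have := Nat.mod_lt t hb
      rw [pow_add]
      omega
    have := add_mul_q_succ_mem_Fset hn hN ha (ih (t / b) hdiv) le_self_add hmod
    convert this using 1
    have hdm : (t : ℝ) = b * (t / b : ℕ) + (t % b : ℕ) := by
      exact_mod_cast (Nat.div_add_mod t b).symm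
    rw [gridStart, sum_Icc_succ_top (by omega), ← gridStart, hdm, ← mul_q_succ hq hk]
    push_cast [b]
    ring

variable (k) in
include hN in
lemma add_le_N : N 0 + k ≤ N k := by
  induction k with
  | zero => rfl
  | succ k ih => rw [hN k]; omega

include hN hq1 hq ha in
lemma a_nonneg {m : ℕ} (hm : N 0 < m) : 0 ≤ a m := by
  suffices ∀ k, ∀ m ∈ Ioc (N 0) (N k), 0 ≤ a m from
    this m m (mem_Ioc.2 ⟨hm, le_of_add_le_right (add_le_N hN m)⟩)
  intro k
  induction k with
  | zero => simp
  | succ k ih =>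
    intro m hm
    rw [mem_Ioc, hN k] at hm
    by_cases hmk : m ≤ N k
    · exact ih m (mem_Ioc.2 ⟨hm.1, hmk⟩)
    · obtain ⟨i, rfl⟩ := Nat.exists_eq_add_of_lt (not_le.1 hmk)
      rw [add_assoc, ha k (i + 1) (by omega) (by omega)]
      exact mul_nonneg (Nat.cast_nonneg _) (q_pos hq1 hq (by omega)).le

variable (k) in
include hN hq1 hq ha in
lemma sum_Ioc_N_le :
    ∑ m ∈ Ioc (N 0) (N k), a m ≤ 2 * ∑ i ∈ Icc 1 k, (3 * (2 : ℝ) ^ n i - 1) * q i := by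
  induction k with
  | zero => simp
  | succ k ih =>
    have hblock : ∑ m ∈ Ioc (N k) (N (k + 1)), a m = (5 * 2 ^ n (k + 1) - 1) * q (k + 1) := by
      rw [hN k, sum_Ioc_eq_sum_Icc_shift,
        sum_congr rfl fun j hj => ha k j (mem_Icc.1 hj).1 (mem_Icc.1 hj).2, ← sum_mul,
        ← Nat.cast_sum, sum_mmB,
        Nat.cast_sub (by have := Nat.one_le_two_pow (n := n (k + 1)); omega)]
      push_cast
      ring
    rw [← sum_Ioc_consecutive _ (le_of_add_le_left (add_le_N hN k)) (by rw [hN k]; omega), hblock,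
      sum_Icc_succ_top (by omega)]
    have := q_pos hq1 hq (by omega : 1 ≤ k + 1)
    nlinarith [one_le_pow₀ (M₀ := ℝ) (n := n (k + 1)) (by norm_num : (1 : ℝ) ≤ 2)]

include hN hq1 hq ha in
lemma summable_norm_a : Summable fun m => ‖a m‖ := by
  rw [← summable_nat_add_iff (N 0 + 1)]
  refine summable_of_sum_range_le (c := 2 * (3 * 2 ^ n 1)) (fun _ => norm_nonneg _) fun M => ?_
  have hshift :
      ∑ j ∈ range M, ‖a (j + (N 0 + 1))‖ = ∑ m ∈ Ioc (N 0) (N 0 + M), a m := by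
    rw [← Ico_add_one_add_one_eq_Ioc, sum_Ico_eq_sum_range, add_right_comm,
      Nat.add_sub_cancel_left]
    exact sum_congr rfl fun j _ => by
      rw [Real.norm_of_nonneg (a_nonneg hN hq1 hq ha (by omega)), add_comm]
  calc ∑ j ∈ range M, ‖a (j + (N 0 + 1))‖
      ≤ ∑ m ∈ Ioc (N 0) (N (M + 1)), a m := by
        rw [hshift]
        refine sum_le_sum_of_subset_of_nonneg (Ioc_subset_Ioc_right ?_)
          fun m hm _ => a_nonneg hN hq1 hq ha (mem_Ioc.1 hm).1
        have := add_le_N hN (M + 1)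
        omega
    _ ≤ 2 * (3 * 2 ^ n 1 - q (M + 1)) := by
        rw [← sum_stretch hq1 hq (by omega)]
        exact sum_Ioc_N_le hN hq1 hq ha (M + 1)
    _ ≤ 2 * (3 * 2 ^ n 1) := by linarith [q_pos hq1 hq (by omega : 1 ≤ M + 1)]

include hN hq1 hq ha in
/-- Already the first two terms `2^(n+1) q (k+1)` and `(2^n + 1) q (k+1)` of group `k + 1`
add up to `q k + q (k+1)`. -/
lemma q_lt_rem (hk : 1 ≤ k) : q k < rem a (N k) := by
  have hsum : Summable fun j => a (N k + 1 + j) := by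
    simpa only [add_comm] using
      (summable_nat_add_iff (N k + 1)).2 (summable_norm_a hN hq1 hq ha).of_norm
  have h₂ : a (N k + 1) + a (N k + 2) ≤ rem a (N k) := by
    have := hsum.sum_le_tsum (range 2) fun j _ =>
      a_nonneg hN hq1 hq ha (by have := add_le_N hN k; omega)
    simpa [sum_range_succ, rem, add_assoc] using this
  rw [ha k 1 le_rfl (by omega), ha k 2 (by omega) (by omega)] at h₂
  have hfirst :
      ((mmB (n (k + 1)) 1 : ℕ) : ℝ) * q (k + 1) + (mmB (n (k + 1)) 2 : ℕ) * q (k + 1)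
        = q k + q (k + 1) := by
    simp only [mmB, reduceIte, OfNat.ofNat_ne_one]
    push_cast
    linear_combination mul_q_succ hq hk
  linarith [q_pos hq1 hq (by omega : 1 ≤ k + 1)]

include hn hN hq1 hq ha in
lemma sub_q_le_deltaEps (hk : 1 ≤ k) :
    3 * 2 ^ n 1 - q k ≤ deltaEps (rem a (N k)) (Fset a (N k)) := by
  have hP : 0 < gridCount n k := prod_pos fun i _ => by positivity
  have hqk := q_pos hq1 hq hk
  calc 3 * 2 ^ n 1 - q k = ((gridCount n k : ℝ) - 1) * q k := by
        rw [sub_mul, gridCount_mul_q hq1 hq hk, one_mul]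
    _ = _ := (arithProg_max'_sub_min' hqk.le hP).symm
    _ ≤ _ := le_deltaEps (arithProg_subset_Fset hn hN hq ha hk)
        (isEpsClose_arithProg hqk (q_lt_rem hN hq1 hq ha hk).le) _

include hq1 hq in
lemma two_pow_le_gridStart (hk : 1 ≤ k) : 2 ^ n 1 ≤ gridStart n q k := by
  induction k, hk using Nat.le_induction with
  | base => simp [gridStart, hq1]
  | succ k hk ih =>
    rw [gridStart, sum_Icc_succ_top (by omega), ← gridStart]
    have := q_pos hq1 hq (by omega : 1 ≤ k + 1)
    nlinarith [pow_pos (two_pos (α := ℝ)) (n (k + 1))]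

include hn hq1 hq in
lemma gridStart_add_q_le (hk : 1 ≤ k) : gridStart n q k + q k ≤ 2 ^ n 1 + 1 := by
  induction k, hk using Nat.le_induction with
  | base => simp [gridStart, hq1]
  | succ k hk ih =>
    rw [gridStart, sum_Icc_succ_top (by omega), ← gridStart]
    linarith [mul_q_succ hq hk, q_succ_le hn hq1 hq hk, q_pos hq1 hq hk]

include hn hN hq1 hq ha in
lemma Ioo_subset_achSet : Set.Ioo (2 ^ n 1 + 1) (4 * 2 ^ n 1 - 1) ⊆ achSet a := by
  intro z hz
  rw [← (isClosed_achSet (summable_norm_a hN hq1 hq ha)).closure_eq, Metric.mem_closure_iff]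
  intro ε hε
  obtain ⟨k, hqk, hk⟩ :=
    (((tendsto_q hn hq1 hq).eventually (gt_mem_nhds hε)).and (eventually_ge_atTop 1)).exists
  have h₀ := q_pos hq1 hq hk
  have h₁ := two_pow_le_gridStart hq1 hq hk
  have h₂ := gridStart_add_q_le hn hq1 hq hk
  have h₃ := q_le_one hn hq1 hq hk
  obtain ⟨x, hx, hzx⟩ := exists_mem_arithProg_abs_sub_lt (L := gridStart n q k) (z := z)
    (P := gridCount n k) h₀
    (by linarith [hz.1]) (by rw [sub_mul, gridCount_mul_q hq1 hq hk]; linarith [hz.2])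
  exact ⟨x, coe_Fset_subset_achSet _ (arithProg_subset_Fset hn hN hq ha hk hx),
    by rw [Real.dist_eq]; linarith⟩

end Construction

end MarchwickiMiska

open MarchwickiMiska

theorem mm_delta_bound_general (n N : ℕ → ℕ) (q a : ℕ → ℝ)
    (hn : ∀ k, 1 ≤ k → 1 ≤ n k)
    (hN : ∀ k, N (k + 1) = N k + (n (k + 1) + 2))
    (hq1 : q 1 = 1) (hq : ∀ k, 1 ≤ k → q (k + 1) = q k / (3 * 2 ^ n (k + 1)))
    (ha : ∀ k i, 1 ≤ i → i ≤ n (k + 1) + 2 →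
      a (N k + i) = (mmB (n (k + 1)) i : ℝ) * q (k + 1)) :
    (∀ k, 1 ≤ k →
      (∑ i ∈ Finset.Icc 1 k, (3 * (2 : ℝ) ^ n i - 1) * q i) ≤
        deltaEps (rem a (N k)) (Fset a (N k))) ∧
    (∀ k, 1 ≤ k →
      (3 * (2 : ℝ) ^ n 1 - 1) ≤ deltaEps (rem a (N k)) (Fset a (N k))) ∧
    (0 : ℝ) < 3 * (2 : ℝ) ^ n 1 - 1 ∧
    (∃ x y : ℝ, x < y ∧ Set.Ioo x y ⊆ achSet a) := by
  have h2 : (1 : ℝ) ≤ 2 ^ n 1 := one_le_pow₀ (by norm_num)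
  refine ⟨fun k hk => ?_, fun k hk => ?_, by linarith, _, _, by linarith,
    Ioo_subset_achSet hn hN hq1 hq ha⟩
  · rw [sum_stretch hq1 hq hk]
    exact sub_q_le_deltaEps hn hN hq1 hq ha hk
  · linarith [q_le_one hn hq1 hq hk, sub_q_le_deltaEps hn hN hq1 hq ha hk]

/-- In the Marchwicki–Miska construction, `Δ_{r (N k)} (F (N k))` is bounded below by
`∑_{i=1}^k (3·2^(n i) − 1) q i ≥ 3·2^(n 1) − 1 > 0`; hence the achievement set
contains an interval. -/
theorem mm_delta_bound (n N : ℕ → ℕ) (q a : ℕ → ℝ)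
    (hn : ∀ k, 1 ≤ k → 1 ≤ n k)
    (hN0 : N 0 = 0) (hN : ∀ k, N (k + 1) = N k + (n (k + 1) + 2))
    (hq1 : q 1 = 1) (hq : ∀ k, 1 ≤ k → q (k + 1) = q k / (3 * 2 ^ n (k + 1)))
    (ha : ∀ k i, 1 ≤ i → i ≤ n (k + 1) + 2 →
      a (N k + i) = (mmB (n (k + 1)) i : ℝ) * q (k + 1)) :
    (∀ k, 1 ≤ k →
      (∑ i ∈ Finset.Icc 1 k, (3 * (2 : ℝ) ^ n i - 1) * q i) ≤
        deltaEps (rem a (N k)) (Fset a (N k))) ∧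
    (∀ k, 1 ≤ k →
      (3 * (2 : ℝ) ^ n 1 - 1) ≤ deltaEps (rem a (N k)) (Fset a (N k))) ∧
    (0 : ℝ) < 3 * (2 : ℝ) ^ n 1 - 1 ∧
    (∃ x y : ℝ, x < y ∧ Set.Ioo x y ⊆ achSet a) :=
  mm_delta_bound_general n N q a hn hN hq1 hq ha
end ArithProg
end
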